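/- arXiv:math/0606442 — 2 statements merged into one kernel-verified Lean document; each statement's English description precedes it below -/
import Mathlib

section
/- Setup: fix finite sets B₁, C, H; for each b ∈ B₁ ∪ {∞} a nonempty finite set A_b with positive integers m_{b,a}; for each c ∈ C a finite (possibly empty) set A'_c with positive integers m'_{c,a'} and a nonempty finite set A''_c with positive integers m''_{c,a''}. Let L be the free ℤ-module on I = (⊔_{b∈B₁∪{∞}} A_b) ⊔ (⊔_{c∈C} A'_c) ⊔ H, let L' be the free ℤ-module on I ⊔ (⊔_{c∈C} A''_c), and let j : L' → L be the projection forgetting the A''-coordinates. Define f_* : L → ℤ^{B₁} and f'_* : L' → ℤ^{B₁} ⊕ ℤ^{C} by (f_*α)_b = ∑_{a∈A_b} m_{b,a}α_{b,a} − ∑_{a∈A_∞} m_{∞,a}α_{∞,a}, with f'_* given by the same B₁-formula together with c-components ∑_{a'} m'_{c,a'}β_{c,a'} + ∑_{a''} m''_{c,a''}β_{c,a''} − ∑_{a∈A_∞} m_{∞,a}β_{∞,a}. Then the quotient group T = (ker f_*)/j(ker f'_*) is a finite abelian group, and its order divides ∏_{c∈C} m''(c), where m''(c) = gcd_{a''∈A''_c}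 m''_{c,a''}. -/
/-!
A lift of `α ∈ ker f_*` to `ker f'_*` is `α` together with `A''`-coordinates `β` solving, for
every `c ∈ C`,
`∑_{a''} m''_{c,a''} β_{c,a''} = ∑_{a ∈ A_∞} m_{∞,a} α_{∞,a} − ∑_{a'} m'_{c,a'} α_{c,a'}`.
By Bézout this is solvable exactly when `m''(c)` divides the right-hand side, so
`j(ker f'_*) = ker θ` and `T` embeds into `⊕_c ℤ/m''(c)ℤ`, a finite group of order `∏_c m''(c)`
since no `m''(c)` vanishes.
-/

open Finset

section PencilModel

variable (B₁ C H : Type) [Fintype B₁] [Fintype C] [Fintype H]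
  (A : Option B₁ → Type) [∀ b, Fintype (A b)]
  (A' : C → Type) [∀ c, Fintype (A' c)]
  (A'' : C → Type) [∀ c, Fintype (A'' c)]
  (m : ∀ b, A b → ℕ) (m' : ∀ c, A' c → ℕ) (m'' : ∀ c, A'' c → ℕ)

/-- The index set of the basis of elementary loops of `L = H₁(M)`: loops around the
curves `C_{b,a}` (`b ∈ B₁ ∪ {∞}`, `a ∈ A_b`), the curves `C'_{c,a'}` (`c ∈ C`,
`a' ∈ A'_c`) and the horizontal components (indexed by `H`). -/
abbrev Idx := (Σ b : Option B₁, A b) ⊕ ((Σ c : C, A' c) ⊕ H)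

/-- The index set of the basis of elementary loops of `L' = H₁(M')`: that of `L`
together with loops around the extra deleted curves `C''_{c,a''}`. -/
abbrev Idx' := (Idx B₁ C H A A') ⊕ (Σ c : C, A'' c)

/-- The projection `j : L' → L` forgetting the `A''`-coordinates. -/
def jmap : ((Idx' B₁ C H A A' A'') → ℤ) →+ ((Idx B₁ C H A A') → ℤ) :=
  AddMonoidHom.mk' (fun β i => β (Sum.inl i)) (fun _ _ => rfl)

/-- The map `f_* : L → ℤ^{B₁}`,
`(f_* α)_b = ∑_{a ∈ A_b} m_{b,a} α_{b,a} − ∑_{a ∈ A_∞} m_{∞,a} α_{∞,a}`. -/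
def fstar : ((Idx B₁ C H A A') → ℤ) →+ (B₁ → ℤ) :=
  AddMonoidHom.mk'
    (fun α b =>
      (∑ a : A (some b), (m (some b) a : ℤ) * α (Sum.inl ⟨some b, a⟩)) -
      (∑ a : A none, (m none a : ℤ) * α (Sum.inl ⟨none, a⟩)))
    (by
      intro x y
      funext b
      simp only [Pi.add_apply, mul_add, Finset.sum_add_distrib]
      ring)

/-- The map `f'_* : L' → ℤ^{B₁} ⊕ ℤ^{C}`, with the same `B₁`-components as `f_*` and with
`c`-component `∑_{a'} m'_{c,a'} β_{c,a'} + ∑_{a''} m''_{c,a''} β_{c,a''}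
− ∑_{a ∈ A_∞} m_{∞,a} β_{∞,a}`. -/
def fstar' : ((Idx' B₁ C H A A' A'') → ℤ) →+ ((B₁ → ℤ) × (C → ℤ)) :=
  AddMonoidHom.mk'
    (fun β =>
      (fun b =>
        (∑ a : A (some b), (m (some b) a : ℤ) * β (Sum.inl (Sum.inl ⟨some b, a⟩))) -
        (∑ a : A none, (m none a : ℤ) * β (Sum.inl (Sum.inl ⟨none, a⟩))),
       fun c =>
        (∑ a' : A' c, (m' c a' : ℤ) * β (Sum.inl (Sum.inr (Sum.inl ⟨c, a'⟩)))) +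
        (∑ a'' : A'' c, (m'' c a'' : ℤ) * β (Sum.inr ⟨c, a''⟩)) -
        (∑ a : A none, (m none a : ℤ) * β (Sum.inl (Sum.inl ⟨none, a⟩)))))
    (by
      intro x y
      refine Prod.ext (funext fun b => ?_) (funext fun c => ?_) <;>
      · simp only [Prod.fst_add, Prod.snd_add, Pi.add_apply, mul_add, Finset.sum_add_distrib]
        ring)

/-- `m''(c)`, the gcd of the multiplicities `m''_{c,a''}` over `a'' ∈ A''_c`. -/
def gcd2 (c : C) : ℕ := Finset.univ.gcd (m'' c)

/-- The map `θ : ker f_* → G = ⊕_{c ∈ C} ℤ/m''(c)ℤ` sending `α` to the element whose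
`c`-coordinate is the class of
`∑_{a ∈ A_∞} m_{∞,a} α_{∞,a} − ∑_{a' ∈ A'_c} m'_{c,a'} α_{c,a'}` modulo `m''(c)`. -/
def theta : (fstar B₁ C H A A' m).ker →+ (∀ c : C, ZMod (gcd2 C A'' m'' c)) :=
  AddMonoidHom.mk'
    (fun α c =>
      ((((∑ a : A none, (m none a : ℤ) * (α : (Idx B₁ C H A A') → ℤ) (Sum.inl ⟨none, a⟩)) -
         (∑ a' : A' c, (m' c a' : ℤ) * (α : (Idx B₁ C H A A') → ℤ) (Sum.inr (Sum.inl ⟨c, a'⟩)))) : ℤ) :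
        ZMod (gcd2 C A'' m'' c)))
    (by
      intro x y
      funext c
      simp only [AddSubgroup.coe_add, Pi.add_apply, mul_add, Finset.sum_add_distrib]
      push_cast
      ring)

end PencilModel

theorem Finset.natCast_gcd {ι : Type*} (s : Finset ι) (f : ι → ℕ) :
    ((s.gcd f : ℕ) : ℤ) = s.gcd (fun i => (f i : ℤ)) := by
  classical
  induction s using Finset.induction with
  | empty => simp
  | insert a s ha ih =>
    rw [gcd_insert, gcd_insert, ← ih, ← Int.coe_gcd, Int.gcd_natCast_natCast]
    rfl

theorem Finset.exists_sum_mul_eq_iff_gcd_dvd {ι : Type*} (s : Finset ι) (f : ι → ℕ) (n : ℤ) :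
    (∃ x : ι → ℤ, ∑ i ∈ s, (f i : ℤ) * x i = n) ↔ ((s.gcd f : ℕ) : ℤ) ∣ n := by
  rw [s.natCast_gcd]
  constructor
  · rintro ⟨x, rfl⟩
    exact dvd_sum fun i hi => (gcd_dvd hi).mul_right _
  · rintro ⟨k, rfl⟩
    obtain ⟨g, hg⟩ := s.gcd_eq_sum_mul (fun i => (f i : ℤ))
    exact ⟨fun i => g i * k, by simp only [hg, sum_mul, mul_assoc]⟩

section PencilModel

variable {B₁ C H : Type} {A : Option B₁ → Type} [∀ b, Fintype (A b)]
  {A' : C → Type} [∀ c, Fintype (A' c)] {A'' : C → Type} [∀ c, Fintype (A'' c)]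
  {m : ∀ b, A b → ℕ} {m' : ∀ c, A' c → ℕ} {m'' : ∀ c, A'' c → ℕ}

theorem fstar'_sumElim (α : Idx B₁ C H A A' → ℤ) (y : (Σ c, A'' c) → ℤ) :
    fstar' B₁ C H A A' A'' m m' m'' (Sum.elim α y) =
      (fstar B₁ C H A A' m α, fun c =>
        (∑ a' : A' c, (m' c a' : ℤ) * α (Sum.inr (Sum.inl ⟨c, a'⟩))) +
        (∑ a'' : A'' c, (m'' c a'' : ℤ) * y ⟨c, a''⟩) -
        (∑ a : A none, (m none a : ℤ) * α (Sum.inl ⟨none, a⟩))) :=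
  rfl

theorem exists_sumElim_mem_ker_fstar'_iff (α : (fstar B₁ C H A A' m).ker) :
    (∃ y : (Σ c, A'' c) → ℤ, Sum.elim (α : Idx B₁ C H A A' → ℤ) y ∈
        (fstar' B₁ C H A A' A'' m m' m'').ker) ↔
      ∀ c, ((gcd2 C A'' m'' c : ℕ) : ℤ) ∣
        (∑ a : A none, (m none a : ℤ) * (α : Idx B₁ C H A A' → ℤ) (Sum.inl ⟨none, a⟩)) -
        (∑ a' : A' c, (m' c a' : ℤ) * (α : Idx B₁ C H A A' → ℤ) (Sum.inr (Sum.inl ⟨c, a'⟩))) := by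
  simp only [gcd2, ← Finset.exists_sum_mul_eq_iff_gcd_dvd, AddMonoidHom.mem_ker, fstar'_sumElim,
    AddMonoidHom.mem_ker.mp α.2, Prod.mk_eq_zero, true_and, funext_iff, Pi.zero_apply]
  constructor
  · rintro ⟨y, hy⟩ c
    exact ⟨fun a'' => y ⟨c, a''⟩, by linarith [hy c]⟩
  · intro h
    choose x hx using h
    exact ⟨fun p => x p.1 p.2, fun c => by linarith [hx c]⟩

theorem map_jmap_ker_fstar'_addSubgroupOf_eq_ker_theta :
    ((fstar' B₁ C H A A' A'' m m' m'').ker.map (jmap B₁ C H A A' A'')).addSubgroupOf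
      (fstar B₁ C H A A' m).ker = (theta B₁ C H A A' A'' m m' m'').ker := by
  ext α
  rw [AddSubgroup.mem_addSubgroupOf, AddSubgroup.mem_map, AddMonoidHom.mem_ker, funext_iff]
  simp only [theta, AddMonoidHom.mk'_apply, Pi.zero_apply, ZMod.intCast_zmod_eq_zero_iff_dvd]
  rw [← exists_sumElim_mem_ker_fstar'_iff]
  constructor
  · rintro ⟨β, hβ, hβα⟩
    refine ⟨β ∘ Sum.inr, ?_⟩
    rw [← hβα]
    exact (Sum.elim_comp_inl_inr β).symm ▸ hβ
  · rintro ⟨y, hy⟩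
    exact ⟨_, hy, rfl⟩

theorem gcd2_ne_zero [∀ c, Nonempty (A'' c)] (hm'' : ∀ c a'', 0 < m'' c a'') (c : C) :
    gcd2 C A'' m'' c ≠ 0 := fun h =>
  have ⟨a''⟩ := ‹∀ c, Nonempty (A'' c)› c
  (hm'' c a'').ne' (Finset.gcd_eq_zero_iff.mp h a'' (Finset.mem_univ a''))

end PencilModel

theorem stmt_12_general (B₁ C H : Type) [Fintype C]
    (A : Option B₁ → Type) [∀ b, Fintype (A b)]
    (A' : C → Type) [∀ c, Fintype (A' c)]
    (A'' : C → Type) [∀ c, Fintype (A'' c)] [∀ c, Nonempty (A'' c)]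
    (m : ∀ b, A b → ℕ)
    (m' : ∀ c, A' c → ℕ)
    (m'' : ∀ c, A'' c → ℕ) (hm'' : ∀ c a'', 0 < m'' c a'') :
    Finite
      ((fstar B₁ C H A A' m).ker ⧸
        ((fstar' B₁ C H A A' A'' m m' m'').ker.map
          (jmap B₁ C H A A' A'')).addSubgroupOf (fstar B₁ C H A A' m).ker) ∧
    Nat.card
      ((fstar B₁ C H A A' m).ker ⧸
        ((fstar' B₁ C H A A' A'' m m' m'').ker.map
          (jmap B₁ C H A A' A'')).addSubgroupOf (fstar B₁ C H A A' m).ker) ∣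
      ∏ c : C, gcd2 C A'' m'' c := by
  rw [map_jmap_ker_fstar'_addSubgroupOf_eq_ker_theta]
  have (c : C) : NeZero (gcd2 C A'' m'' c) := ⟨gcd2_ne_zero hm'' c⟩
  have hθ := QuotientAddGroup.kerLift_injective (theta B₁ C H A A' A'' m m' m'')
  refine ⟨Finite.of_injective _ hθ, ?_⟩
  calc _ ∣ Nat.card (∀ c, ZMod (gcd2 C A'' m'' c)) := AddSubgroup.card_dvd_of_injective _ hθ
    _ = ∏ c : C, gcd2 C A'' m'' c := by simp only [Nat.card_pi, Nat.card_zmod]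

/-- the quotient group `T = (ker f_*)/j(ker f'_*)` is a finite abelian
group whose order divides `∏_{c ∈ C} m''(c)`. -/
theorem stmt_12 (B₁ C H : Type) [Fintype B₁] [Fintype C] [Fintype H]
    (A : Option B₁ → Type) [∀ b, Fintype (A b)] [∀ b, Nonempty (A b)]
    (A' : C → Type) [∀ c, Fintype (A' c)]
    (A'' : C → Type) [∀ c, Fintype (A'' c)] [∀ c, Nonempty (A'' c)]
    (m : ∀ b, A b → ℕ) (hm : ∀ b a, 0 < m b a)
    (m' : ∀ c, A' c → ℕ) (hm' : ∀ c a', 0 < m' c a')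
    (m'' : ∀ c, A'' c → ℕ) (hm'' : ∀ c a'', 0 < m'' c a'') :
    Finite
      ((fstar B₁ C H A A' m).ker ⧸
        ((fstar' B₁ C H A A' A'' m m' m'').ker.map
          (jmap B₁ C H A A' A'')).addSubgroupOf (fstar B₁ C H A A' m).ker) ∧
    Nat.card
      ((fstar B₁ C H A A' m).ker ⧸
        ((fstar' B₁ C H A A' A'' m m' m'').ker.map
          (jmap B₁ C H A A' A'')).addSubgroupOf (fstar B₁ C H A A' m).ker) ∣
      ∏ c : C, gcd2 C A'' m'' c :=
  stmt_12_general B₁ C H A A' A'' m m' m'' hm''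
end

section
/- Setup: fix finite sets B₁, C, H; for each b ∈ B₁ ∪ {∞} a nonempty finite set A_b with positive integers m_{b,a}; for each c ∈ C a nonempty finite set A''_c with positive integers m''_{c,a''}, and assume A'_c = ∅ for all c ∈ C (the minimal-arrangement case). Let L be the free ℤ-module on I = (⊔_{b∈B₁∪{∞}} A_b) ⊔ H, L' the free ℤ-module on I ⊔ (⊔_{c∈C} A''_c), j : L' → L the projection forgetting the A''-coordinates, (f_*α)_b = ∑_{a∈A_b} m_{b,a}α_{b,a} − ∑_{a∈A_∞} m_{∞,a}α_{∞,a} for b ∈ B₁, and f'_* : L' → ℤ^{B₁} ⊕ ℤ^{C} given by the same B₁-formula together with c-components ∑_{a''∈A''_c} m''_{c,a''}β_{c,a''} − ∑_{a∈A_∞} m_{∞,a}β_{∞,a}. Set m''(c) = gcd_{a''∈A''_c} m''_{c,a''}, G = ⊕_{c∈C} ℤ/m''(c)ℤ, m(b) = gcd_{a∈A_b} m_{b,a} for b ∈ B₁ ∪ {∞}, and m(f) = lcm of the m(b) over b ∈ B₁ ∪ {∞}. Let θ : ker f_* → G send α to the element whose c-coordinate is the class of ∑_{a∈A_∞} m_{∞,a}α_{∞,a}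 modulo m''(c). Then θ(ker f_*) is the cyclic subgroup of G generated by the element whose c-coordinate is the class of m(f) modulo m''(c) for every c ∈ C; consequently the quotient T = (ker f_*)/j(ker f'_*) is a cyclic group, and if m''(c) divides m(f) for all c ∈ C then T is trivial. -/
open Finset

/-!
With no `A'`-curves, `θ α` is, in every coordinate, the class of the degree
`d(α) = ∑_{a ∈ A_∞} m_{∞,a} α_{∞,a}` of `α` over the fibre at infinity. On `ker f_*` the degrees
over all fibres agree, so by Bézout for the gcds `m(b)` the values of `d` on `ker f_*` are exactly
the multiples of `m(f)`; this is the image of `θ`. Likewise `α ∈ ker f_*` lifts to `ker f'_*`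
exactly when each sum `∑_{a''} m''_{c,a''} β_{c,a''}` can be made equal to `d(α)`, i.e. when
`m''(c) ∣ d(α)` for all `c`. Hence `j(ker f'_*) = ker θ`, so `T ≅ im θ` is cyclic, and it is
trivial when its generator vanishes.
-/

theorem Int.natCast_finsetGcd {ι : Type*} (s : Finset ι) (f : ι → ℕ) :
    ((s.gcd f : ℕ) : ℤ) = s.gcd fun i => (f i : ℤ) := by
  induction s using Finset.cons_induction with
  | empty => simp
  | cons a s ha ih => rw [gcd_cons, gcd_cons, ← ih, ← Int.coe_gcd, Int.gcd_natCast_natCast]; rfl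

theorem Int.natCast_finsetGcd_dvd_iff_exists_sum_mul {ι : Type*} (s : Finset ι) (f : ι → ℕ)
    (n : ℤ) :
    ((s.gcd f : ℕ) : ℤ) ∣ n ↔ ∃ x : ι → ℤ, ∑ i ∈ s, (f i : ℤ) * x i = n := by
  rw [Int.natCast_finsetGcd]
  constructor
  · rintro ⟨k, rfl⟩
    obtain ⟨g, hg⟩ := s.gcd_eq_sum_mul fun i => (f i : ℤ)
    exact ⟨fun i => g i * k, by simp only [hg, sum_mul, mul_assoc]⟩
  · rintro ⟨x, rfl⟩
    exact dvd_sum fun i hi => (gcd_dvd hi).mul_right _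

section MinimalArrangement

variable {B₁ C H : Type} {A : Option B₁ → Type} [∀ b, Fintype (A b)] {A' A'' : C → Type}
  (m : ∀ b, A b → ℕ)

def fiberSum (b : Option B₁) (α : Idx B₁ C H A A' → ℤ) : ℤ :=
  ∑ a : A b, (m b a : ℤ) * α (Sum.inl ⟨b, a⟩)

theorem mem_ker_fstar_iff {α : Idx B₁ C H A A' → ℤ} :
    α ∈ (fstar B₁ C H A A' m).ker ↔ ∀ b, fiberSum m (some b) α = fiberSum m none α := by
  simp only [AddMonoidHom.mem_ker, funext_iff, fstar, AddMonoidHom.mk'_apply, Pi.zero_apply,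
    sub_eq_zero, fiberSum]

theorem natCast_lcm_dvd_iff_exists_mem_ker_fstar [Fintype B₁] (n : ℤ) :
    ((univ.lcm fun b => univ.gcd (m b) : ℕ) : ℤ) ∣ n ↔
      ∃ α ∈ (fstar B₁ C H A A' m).ker, fiberSum m none α = n := by
  rw [Int.natCast_dvd, Finset.lcm_dvd_iff]
  simp only [mem_univ, true_implies, ← Int.natCast_dvd,
    Int.natCast_finsetGcd_dvd_iff_exists_sum_mul]
  constructor
  · intro h
    choose x hx using h
    refine ⟨Sum.elim (fun p => x p.1 p.2) 0, (mem_ker_fstar_iff m).2 fun b => ?_, hx none⟩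
    simp only [fiberSum, Sum.elim_inl, hx]
  · rintro ⟨α, hα, rfl⟩ b
    refine ⟨fun a => α (Sum.inl ⟨b, a⟩), ?_⟩
    cases b with
    | none => rfl
    | some b => exact (mem_ker_fstar_iff m).1 hα b

variable [∀ c, Fintype (A' c)] [∀ c, IsEmpty (A' c)] [∀ c, Fintype (A'' c)]
  (m' : ∀ c, A' c → ℕ) (m'' : ∀ c, A'' c → ℕ)

theorem theta_apply (α : (fstar B₁ C H A A' m).ker) (c : C) :
    theta B₁ C H A A' A'' m m' m'' α c =
      (fiberSum m none (α : Idx B₁ C H A A' → ℤ) : ZMod (gcd2 C A'' m'' c)) := by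
  simp [theta, fiberSum]

theorem mem_ker_fstar'_iff {β : Idx' B₁ C H A A' A'' → ℤ} :
    β ∈ (fstar' B₁ C H A A' A'' m m' m'').ker ↔
      jmap B₁ C H A A' A'' β ∈ (fstar B₁ C H A A' m).ker ∧
        ∀ c, ∑ a'' : A'' c, (m'' c a'' : ℤ) * β (Sum.inr ⟨c, a''⟩) =
          fiberSum m none (jmap B₁ C H A A' A'' β) := by
  simp [AddMonoidHom.mem_ker, Prod.ext_iff, funext_iff, fstar', fstar, jmap, fiberSum, sub_eq_zero]

theorem mem_map_jmap_ker_fstar'_iff {α : Idx B₁ C H A A' → ℤ}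
    (hα : α ∈ (fstar B₁ C H A A' m).ker) :
    α ∈ (fstar' B₁ C H A A' A'' m m' m'').ker.map (jmap B₁ C H A A' A'') ↔
      ∀ c, ((gcd2 C A'' m'' c : ℕ) : ℤ) ∣ fiberSum m none α := by
  simp only [gcd2, Int.natCast_finsetGcd_dvd_iff_exists_sum_mul]
  constructor
  · rintro ⟨β, hβ, rfl⟩ c
    exact ⟨fun a'' => β (Sum.inr ⟨c, a''⟩), ((mem_ker_fstar'_iff m m' m'').1 hβ).2 c⟩
  · intro h
    choose y hy using h
    exact ⟨Sum.elim α fun p => y p.1 p.2, (mem_ker_fstar'_iff m m' m'').2 ⟨hα, hy⟩, rfl⟩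

theorem ker_theta :
    (theta B₁ C H A A' A'' m m' m'').ker =
      ((fstar' B₁ C H A A' A'' m m' m'').ker.map (jmap B₁ C H A A' A'')).addSubgroupOf
        (fstar B₁ C H A A' m).ker := by
  ext ⟨α, hα⟩
  rw [AddSubgroup.mem_addSubgroupOf, mem_map_jmap_ker_fstar'_iff m m' m'' hα,
    AddMonoidHom.mem_ker, funext_iff]
  simp only [theta_apply, Pi.zero_apply, ZMod.intCast_zmod_eq_zero_iff_dvd]

theorem range_theta [Fintype B₁] :
    (theta B₁ C H A A' A'' m m' m'').range =
      AddSubgroup.zmultiples fun c =>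
        ((univ.lcm fun b => univ.gcd (m b) : ℕ) : ZMod (gcd2 C A'' m'' c)) := by
  ext v
  have theta_eq_zsmul (α : (fstar B₁ C H A A' m).ker) (k : ℤ)
      (hk : fiberSum m none (α : Idx B₁ C H A A' → ℤ) =
        (univ.lcm fun b => univ.gcd (m b) : ℕ) * k) :
      theta B₁ C H A A' A'' m m' m'' α =
        k • fun c => ((univ.lcm fun b => univ.gcd (m b) : ℕ) : ZMod (gcd2 C A'' m'' c)) := by
    funext c
    rw [theta_apply, hk, Pi.smul_apply, zsmul_eq_mul]
    push_cast
    ring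
  simp only [AddMonoidHom.mem_range, AddSubgroup.mem_zmultiples_iff]
  constructor
  · rintro ⟨α, rfl⟩
    obtain ⟨k, hk⟩ :=
      (natCast_lcm_dvd_iff_exists_mem_ker_fstar (H := H) (A' := A') m _).2 ⟨α, α.2, rfl⟩
    exact ⟨k, (theta_eq_zsmul α k hk).symm⟩
  · rintro ⟨k, rfl⟩
    obtain ⟨α, hα, hk⟩ :=
      (natCast_lcm_dvd_iff_exists_mem_ker_fstar (H := H) (A' := A') m _).1 (dvd_mul_right _ k)
    exact ⟨⟨α, hα⟩, theta_eq_zsmul ⟨α, hα⟩ k hk⟩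

end MinimalArrangement

theorem stmt_14_general (B₁ C H : Type) [Fintype B₁]
    (A : Option B₁ → Type) [∀ b, Fintype (A b)]
    (A' : C → Type) [∀ c, Fintype (A' c)] [∀ c, IsEmpty (A' c)]
    (A'' : C → Type) [∀ c, Fintype (A'' c)]
    (m : ∀ b, A b → ℕ)
    (m' : ∀ c, A' c → ℕ)
    (m'' : ∀ c, A'' c → ℕ) :
    ((theta B₁ C H A A' A'' m m' m'').range =
      AddSubgroup.zmultiples
        (fun c : C =>
          ((Finset.univ.lcm fun b : Option B₁ => Finset.univ.gcd (m b) : ℕ) :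
            ZMod (gcd2 C A'' m'' c)))) ∧
    IsAddCyclic
      ((fstar B₁ C H A A' m).ker ⧸
        ((fstar' B₁ C H A A' A'' m m' m'').ker.map
          (jmap B₁ C H A A' A'')).addSubgroupOf (fstar B₁ C H A A' m).ker) ∧
    ((∀ c : C, gcd2 C A'' m'' c ∣ Finset.univ.lcm fun b : Option B₁ => Finset.univ.gcd (m b)) →
      Subsingleton
        ((fstar B₁ C H A A' m).ker ⧸
          ((fstar' B₁ C H A A' A'' m m' m'').ker.map
            (jmap B₁ C H A A' A'')).addSubgroupOf (fstar B₁ C H A A' m).ker)) := by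
  let e := (QuotientAddGroup.quotientAddEquivOfEq (ker_theta m m' m'').symm).trans
    (QuotientAddGroup.quotientKerEquivRange (theta B₁ C H A A' A'' m m' m''))
  have hrange := range_theta (H := H) m m' m''
  refine ⟨hrange, ?_, fun hdvd => ?_⟩
  · have : IsAddCyclic (theta B₁ C H A A' A'' m m' m'').range := hrange ▸ inferInstance
    exact isAddCyclic_of_surjective e.symm e.symm.surjective
  · have hbot : (theta B₁ C H A A' A'' m m' m'').range = ⊥ := by
      rw [hrange, ← AddSubgroup.zmultiples_zero_eq_bot]
      congr
      funext c
      exact (ZMod.natCast_eq_zero_iff _ _).2 (hdvd c)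
    have : Subsingleton (theta B₁ C H A A' A'' m m' m'').range := hbot ▸ inferInstance
    exact e.toEquiv.subsingleton

/-- Corollary 6.2 of the paper, explicit model: in the minimal-arrangement
case (all the sets `A'_c` are empty), with `m(b) = gcd_{a ∈ A_b} m_{b,a}` and
`m(f) = lcm_{b ∈ B₁ ∪ {∞}} m(b)`, the image of `θ` is the cyclic subgroup of
`G = ⊕_{c ∈ C} ℤ/m''(c)ℤ` generated by the element whose every `c`-coordinate is the class
of `m(f)`; consequently `T = (ker f_*)/j(ker f'_*)` is cyclic, and if `m''(c) ∣ m(f)` for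
all `c ∈ C` then `T` is trivial. -/
theorem stmt_14 (B₁ C H : Type) [Fintype B₁] [Fintype C] [Fintype H]
    (A : Option B₁ → Type) [∀ b, Fintype (A b)] [∀ b, Nonempty (A b)]
    (A' : C → Type) [∀ c, Fintype (A' c)] [∀ c, IsEmpty (A' c)]
    (A'' : C → Type) [∀ c, Fintype (A'' c)] [∀ c, Nonempty (A'' c)]
    (m : ∀ b, A b → ℕ) (hm : ∀ b a, 0 < m b a)
    (m' : ∀ c, A' c → ℕ)
    (m'' : ∀ c, A'' c → ℕ) (hm'' : ∀ c a'', 0 < m'' c a'') :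
    ((theta B₁ C H A A' A'' m m' m'').range =
      AddSubgroup.zmultiples
        (fun c : C =>
          ((Finset.univ.lcm fun b : Option B₁ => Finset.univ.gcd (m b) : ℕ) :
            ZMod (gcd2 C A'' m'' c)))) ∧
    IsAddCyclic
      ((fstar B₁ C H A A' m).ker ⧸
        ((fstar' B₁ C H A A' A'' m m' m'').ker.map
          (jmap B₁ C H A A' A'')).addSubgroupOf (fstar B₁ C H A A' m).ker) ∧
    ((∀ c : C, gcd2 C A'' m'' c ∣ Finset.univ.lcm fun b : Option B₁ => Finset.univ.gcd (m b)) →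
      Subsingleton
        ((fstar B₁ C H A A' m).ker ⧸
          ((fstar' B₁ C H A A' A'' m m' m'').ker.map
            (jmap B₁ C H A A' A'')).addSubgroupOf (fstar B₁ C H A A' m).ker)) :=
  stmt_14_general B₁ C H A A' A'' m m' m''
end
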